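/- arXiv:2401.05102 — 3 statements merged into one kernel-verified Lean document; each statement's English description precedes it below -/
import Mathlib

section
/- For finite alphabets, any joint distribution P on (X^n, Y^n) and any test distribution T on Y^n, the directed information is upper bounded as I(X^n → Y^n) ≤ E_{X^n‖Y^{n−1}}[D(P_{Y^n‖X^n} ‖ T_{Y^n})], i.e., I(X^n → Y^n) ≤ Σ_{x^n,y^n} P(x^n‖y^{n−1}) P(y^n‖x^n) log₂(P(y^n‖x^n)/T(y^n)). -/
/-!
By the chain rule, `P(x^n‖y^{n-1}) · P(y^n‖x^n) = P(x^n, y^n)`, and the directed information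
telescopes to `E[log₂ (P(Y^n‖X^n) / P(Y^n))]`. Replacing the output marginal `P(Y^n)` by `T`
changes this expectation by exactly `D(P_{Y^n} ‖ T) ≥ 0` (Gibbs' inequality).
-/

open scoped Classical

namespace Stmt1

variable {X Y : Type}

/-- `marg n P a b x y` is the marginal probability `P(x^a, y^b)`. -/
noncomputable def marg (n : ℕ) [Fintype X] [Fintype Y]
    (P : (Fin n → X) × (Fin n → Y) → ℝ) (a b : ℕ)
    (x : Fin n → X) (y : Fin n → Y) : ℝ :=
  ∑ x' : Fin n → X, ∑ y' : Fin n → Y,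
    if (∀ j : Fin n, (j : ℕ) < a → x' j = x j) ∧ (∀ j : Fin n, (j : ℕ) < b → y' j = y j)
      then P (x', y') else 0

/-- Directed information `I(X^n → Y^n) = ∑_{i=1}^n I(X^i; Y_i | Y^{i-1})`. -/
noncomputable def directedInfo (n : ℕ) [Fintype X] [Fintype Y]
    (P : (Fin n → X) × (Fin n → Y) → ℝ) : ℝ :=
  ∑ i ∈ Finset.range n, ∑ x : Fin n → X, ∑ y : Fin n → Y,
    P (x, y) * Real.logb 2
      ((marg n P (i + 1) (i + 1) x y * marg n P 0 i x y) /
        (marg n P (i + 1) i x y * marg n P 0 (i + 1) x y))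

/-- Causal conditioning `P(y^n ‖ x^n) = ∏_{i=1}^n P(y_i | y^{i-1}, x^i)`. -/
noncomputable def causalY (n : ℕ) [Fintype X] [Fintype Y]
    (P : (Fin n → X) × (Fin n → Y) → ℝ) (x : Fin n → X) (y : Fin n → Y) : ℝ :=
  ∏ i ∈ Finset.range n, marg n P (i + 1) (i + 1) x y / marg n P (i + 1) i x y

/-- Causal conditioning of the inputs `P(x^n ‖ y^{n-1}) = ∏_{i=1}^n P(x_i | x^{i-1}, y^{i-1})`. -/
noncomputable def causalX (n : ℕ) [Fintype X] [Fintype Y]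
    (P : (Fin n → X) × (Fin n → Y) → ℝ) (x : Fin n → X) (y : Fin n → Y) : ℝ :=
  ∏ i ∈ Finset.range n, marg n P (i + 1) i x y / marg n P i i x y

open Finset Real

lemma prod_range_div₀ {G : Type*} [CommGroupWithZero G] {g : ℕ → G} (h0 : g 0 ≠ 0)
    (hg : ∀ k, g k = 0 → g (k + 1) = 0) (m : ℕ) :
    ∏ k ∈ range m, g (k + 1) / g k = g m / g 0 := by
  induction m with
  | zero => simp [h0]
  | succ m ih =>
    rw [prod_range_succ, ih]
    by_cases hm : g m = 0
    · simp [hm, hg m hm]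
    · exact div_mul_div_cancel₀' hm _ _

lemma sub_le_mul_log_div {p q : ℝ} (hp : 0 ≤ p) (hq : 0 ≤ q) (hpq : p ≠ 0 → q ≠ 0) :
    p - q ≤ p * log (p / q) := by
  rcases hp.eq_or_lt with rfl | hp
  · simpa using hq
  have hq := hq.lt_of_ne' (hpq hp.ne')
  calc p - q = p * (1 - (p / q)⁻¹) := by field_simp
    _ ≤ p * log (p / q) := by gcongr; exact one_sub_inv_le_log_of_pos (div_pos hp hq)

lemma sum_mul_logb_div_nonneg {ι : Type*} {s : Finset ι} {p q : ι → ℝ} {b : ℝ} (hb : 1 < b)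
    (hp : ∀ i ∈ s, 0 ≤ p i) (hq : ∀ i ∈ s, 0 ≤ q i) (hpq : ∑ i ∈ s, q i ≤ ∑ i ∈ s, p i)
    (hsupp : ∀ i ∈ s, p i ≠ 0 → q i ≠ 0) :
    0 ≤ ∑ i ∈ s, p i * logb b (p i / q i) := by
  have hlog : 0 ≤ ∑ i ∈ s, p i * log (p i / q i) :=
    calc 0 ≤ ∑ i ∈ s, (p i - q i) := by rw [sum_sub_distrib]; linarith
      _ ≤ _ := sum_le_sum fun i hi => sub_le_mul_log_div (hp i hi) (hq i hi) (hsupp i hi)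
  simp only [logb, mul_div_assoc', ← sum_div]
  exact div_nonneg hlog (log_pos hb).le

lemma sum_mul_logb_div_marginal_le {α β : Type*} [Fintype α] [Fintype β] {b : ℝ} (hb : 1 < b)
    {P : α × β → ℝ} {c : α → β → ℝ} {T : β → ℝ} (hP0 : ∀ p, 0 ≤ P p) (hT0 : ∀ y, 0 ≤ T y)
    (hT : ∑ y, T y ≤ ∑ p, P p) (hsupp : ∀ y, ∑ x, P (x, y) ≠ 0 → T y ≠ 0)
    (hc : ∀ x y, P (x, y) ≠ 0 → c x y ≠ 0) :
    ∑ x, ∑ y, P (x, y) * logb b (c x y / ∑ x', P (x', y)) ≤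
      ∑ x, ∑ y, P (x, y) * logb b (c x y / T y) := by
  set Q : β → ℝ := fun y => ∑ x, P (x, y) with hQ
  have hsplit : ∀ x y, P (x, y) * logb b (c x y / T y) =
      P (x, y) * logb b (c x y / Q y) + P (x, y) * logb b (Q y / T y) := by
    intro x y
    rcases eq_or_ne (P (x, y)) 0 with h | h
    · simp [h]
    have hQy : Q y ≠ 0 := ((hP0 _).lt_of_ne' h |>.trans_le
      (single_le_sum (fun x' _ => hP0 (x', y)) (mem_univ x))).ne'
    rw [← mul_add, logb_div (hc x y h) (hsupp y hQy), logb_div (hc x y h) hQy,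
      logb_div hQy (hsupp y hQy)]
    ring
  have hgibbs : 0 ≤ ∑ y, Q y * logb b (Q y / T y) :=
    sum_mul_logb_div_nonneg hb (fun y _ => sum_nonneg fun x _ => hP0 (x, y)) (fun y _ => hT0 y)
      (by rwa [← Fintype.sum_prod_type_right]) (fun y _ => hsupp y)
  calc _ ≤ ∑ x, ∑ y, P (x, y) * logb b (c x y / Q y) + ∑ y, Q y * logb b (Q y / T y) :=
        le_add_of_nonneg_right hgibbs
    _ = _ := by simp_rw [hsplit, sum_add_distrib, hQ, sum_mul]; rw [sum_comm (γ := β)]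

section Marginals

variable {n : ℕ} [Fintype X] [Fintype Y] {P : (Fin n → X) × (Fin n → Y) → ℝ}

lemma marg_nonneg (hP0 : ∀ p, 0 ≤ P p) (a b : ℕ) (x : Fin n → X) (y : Fin n → Y) :
    0 ≤ marg n P a b x y :=
  sum_nonneg fun _ _ => sum_nonneg fun _ _ => ite_nonneg (hP0 _) le_rfl

lemma marg_anti (hP0 : ∀ p, 0 ≤ P p) {a a' b b' : ℕ} (ha : a ≤ a') (hb : b ≤ b')
    (x : Fin n → X) (y : Fin n → Y) :
    marg n P a' b' x y ≤ marg n P a b x y := by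
  refine sum_le_sum fun x' _ => sum_le_sum fun y' _ => ?_
  split_ifs with h' h
  · exact le_rfl
  · exact absurd ⟨fun j hj => h'.1 j (hj.trans_le ha), fun j hj => h'.2 j (hj.trans_le hb)⟩ h
  · exact hP0 _
  · exact le_rfl

lemma marg_eq_zero_of_le (hP0 : ∀ p, 0 ≤ P p) {a a' b b' : ℕ} (ha : a ≤ a') (hb : b ≤ b')
    {x : Fin n → X} {y : Fin n → Y} (h : marg n P a b x y = 0) : marg n P a' b' x y = 0 :=
  le_antisymm (h ▸ marg_anti hP0 ha hb x y) (marg_nonneg hP0 a' b' x y)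

lemma apply_le_marg (hP0 : ∀ p, 0 ≤ P p) (a b : ℕ) (x : Fin n → X) (y : Fin n → Y) :
    P (x, y) ≤ marg n P a b x y := by
  rw [marg, ← Fintype.sum_prod_type']
  exact (single_le_sum (fun p _ => ite_nonneg (hP0 p) le_rfl) (mem_univ (x, y))).trans' (by simp)

lemma marg_pos (hP0 : ∀ p, 0 ≤ P p) {x : Fin n → X} {y : Fin n → Y} (hxy : 0 < P (x, y))
    (a b : ℕ) : 0 < marg n P a b x y :=
  hxy.trans_le (apply_le_marg hP0 a b x y)

lemma marg_zero_zero (x : Fin n → X) (y : Fin n → Y) : marg n P 0 0 x y = ∑ p, P p := by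
  simp [marg, Fintype.sum_prod_type]

lemma marg_zero_n (x : Fin n → X) (y : Fin n → Y) :
    marg n P 0 n x y = ∑ x' : Fin n → X, P (x', y) := by
  simp [marg, ← funext_iff]

lemma marg_n_n (x : Fin n → X) (y : Fin n → Y) : marg n P n n x y = P (x, y) := by
  simp [marg, ← funext_iff, ite_and]

end Marginals

section CausalConditioning

variable {n : ℕ} [Fintype X] [Fintype Y] {P : (Fin n → X) × (Fin n → Y) → ℝ}

lemma causalX_mul_causalY (hP0 : ∀ p, 0 ≤ P p) (hP1 : ∑ p, P p = 1)
    (x : Fin n → X) (y : Fin n → Y) :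
    causalX n P x y * causalY n P x y = P (x, y) := by
  have h0 : marg n P 0 0 x y ≠ 0 := by rw [marg_zero_zero, hP1]; exact one_ne_zero
  calc causalX n P x y * causalY n P x y
      = ∏ i ∈ range n, marg n P (i + 1) (i + 1) x y / marg n P i i x y := by
        rw [causalX, causalY, ← prod_mul_distrib]
        refine prod_congr rfl fun i _ => ?_
        by_cases h : marg n P (i + 1) i x y = 0
        · simp [h, marg_eq_zero_of_le hP0 le_rfl i.le_succ h]
        · exact div_mul_div_cancel₀' h _ _
    _ = P (x, y) := by
        rw [prod_range_div₀ (g := fun i => marg n P i i x y) h0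
          (fun k => marg_eq_zero_of_le hP0 k.le_succ k.le_succ), marg_n_n, marg_zero_zero, hP1,
          div_one]

lemma sum_logb_marg_ratio_eq (hP0 : ∀ p, 0 ≤ P p) (hP1 : ∑ p, P p = 1)
    {x : Fin n → X} {y : Fin n → Y} (hxy : 0 < P (x, y)) :
    ∑ i ∈ range n, logb 2 ((marg n P (i + 1) (i + 1) x y * marg n P 0 i x y) /
        (marg n P (i + 1) i x y * marg n P 0 (i + 1) x y)) =
      logb 2 (causalY n P x y / ∑ x' : Fin n → X, P (x', y)) := by
  have hpos := marg_pos hP0 hxy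
  have houtput : ∏ i ∈ range n, marg n P 0 (i + 1) x y / marg n P 0 i x y =
      ∑ x' : Fin n → X, P (x', y) := by
    rw [prod_range_div₀ (g := fun i => marg n P 0 i x y) (hpos 0 0).ne'
      (fun k => marg_eq_zero_of_le hP0 le_rfl k.le_succ), marg_zero_n, marg_zero_zero, hP1,
      div_one]
  rw [← logb_prod _ _ fun i _ =>
      (div_pos (mul_pos (hpos _ _) (hpos _ _)) (mul_pos (hpos _ _) (hpos _ _))).ne',
    ← houtput, causalY, ← prod_div_distrib]
  refine congrArg _ (prod_congr rfl fun i _ => ?_)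
  rw [mul_div_mul_comm, div_div_eq_mul_div, mul_div_assoc]

lemma directedInfo_eq_sum_mul_logb_causalY_div (hP0 : ∀ p, 0 ≤ P p) (hP1 : ∑ p, P p = 1) :
    directedInfo n P =
      ∑ x, ∑ y, P (x, y) * logb 2 (causalY n P x y / ∑ x' : Fin n → X, P (x', y)) := by
  rw [directedInfo, sum_comm]
  refine sum_congr rfl fun x _ => ?_
  rw [sum_comm]
  refine sum_congr rfl fun y _ => ?_
  rw [← mul_sum]
  rcases (hP0 (x, y)).eq_or_lt with h | h
  · simp [← h]
  · rw [sum_logb_marg_ratio_eq hP0 hP1 h]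

lemma causalY_pos (hP0 : ∀ p, 0 ≤ P p) {x : Fin n → X} {y : Fin n → Y} (hxy : 0 < P (x, y)) :
    0 < causalY n P x y :=
  prod_pos fun _ _ => div_pos (marg_pos hP0 hxy _ _) (marg_pos hP0 hxy _ _)

end CausalConditioning

/-- For any joint pmf `P` on `(X^n, Y^n)` (factorizing as
`P(x^n, y^n) = P(x^n‖y^{n-1})·P(y^n‖x^n)`) and any test pmf `T` on `Y^n`,
`I(X^n → Y^n) ≤ Σ_{x^n,y^n} P(x^n‖y^{n-1}) P(y^n‖x^n) log₂(P(y^n‖x^n)/T(y^n))`. -/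
theorem directedInfo_le_expected_divergence (n : ℕ) [Fintype X] [Fintype Y]
    (P : (Fin n → X) × (Fin n → Y) → ℝ) (T : (Fin n → Y) → ℝ)
    (hP0 : ∀ p, 0 ≤ P p) (hP1 : ∑ p : (Fin n → X) × (Fin n → Y), P p = 1)
    (hT0 : ∀ y, 0 ≤ T y) (hT1 : ∑ y : Fin n → Y, T y = 1)
    (hsupp : ∀ y : Fin n → Y, (∑ x : Fin n → X, P (x, y)) ≠ 0 → T y ≠ 0) :
    directedInfo n P ≤
      ∑ x : Fin n → X, ∑ y : Fin n → Y,
        causalX n P x y * causalY n P x y *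
          Real.logb 2 (causalY n P x y / T y) := by
  rw [directedInfo_eq_sum_mul_logb_causalY_div hP0 hP1]
  simp_rw [causalX_mul_causalY hP0 hP1]
  exact sum_mul_logb_div_marginal_le one_lt_two hP0 hT0 (hT1.trans hP1.symm).le hsupp
    fun x y h => (causalY_pos hP0 ((hP0 _).lt_of_ne' h)).ne'

end Stmt1
end

section
/- (Equality of Bellman candidates for NOST.) Let ε ∈ (0,1) and a = ε^ε(1+ε̄)^{1+ε̄} / (ε^ε(1+ε̄)^{1+ε̄} + ε̄^{ε̄}(1+ε)^{1+ε}) with ε̄ = 1−ε, ā = 1−a. Then (1 − ε/2)·log₂((1 − ε/2)/a) + (ε/2)·log₂(ε/(2ā)) = (ε̄/2)·log₂(ε̄/(2a)) + ((1+ε)/2)·log₂((1+ε)/(2ā)), and both sides equal (1/2)·log₂( (1/4)·(ε/(1−a))^ε·((1+ε̄)/a)^{1+ε̄} ). -/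
namespace Stmt12

/-- The optimal test-distribution parameter
`a = ε^ε (1+ε̄)^{1+ε̄} / (ε^ε (1+ε̄)^{1+ε̄} + ε̄^ε̄ (1+ε)^{1+ε})` with `ε̄ = 1 − ε`. -/
noncomputable def aOpt (ε : ℝ) : ℝ :=
  (ε ^ ε * (1 + (1 - ε)) ^ (1 + (1 - ε))) /
    (ε ^ ε * (1 + (1 - ε)) ^ (1 + (1 - ε)) + (1 - ε) ^ (1 - ε) * (1 + ε) ^ (1 + ε))

/-- The two Bellman candidates (actions `x = 0` and `x = 1`) for the NOST
channel agree, and both equal `ρ* = (1/2)·log₂((1/4)·(ε/(1−a))^ε·((1+ε̄)/a)^{1+ε̄})`. -/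
theorem nost_bellman_candidates_equal (ε : ℝ) (hε : ε ∈ Set.Ioo (0 : ℝ) 1) :
    ((1 - ε / 2) * Real.logb 2 ((1 - ε / 2) / aOpt ε) +
        (ε / 2) * Real.logb 2 (ε / (2 * (1 - aOpt ε))) =
      ((1 - ε) / 2) * Real.logb 2 ((1 - ε) / (2 * aOpt ε)) +
        ((1 + ε) / 2) * Real.logb 2 ((1 + ε) / (2 * (1 - aOpt ε)))) ∧
    ((1 - ε / 2) * Real.logb 2 ((1 - ε / 2) / aOpt ε) +
        (ε / 2) * Real.logb 2 (ε / (2 * (1 - aOpt ε))) =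
      (1 / 2) * Real.logb 2
        ((1 / 4) * (ε / (1 - aOpt ε)) ^ ε *
          ((1 + (1 - ε)) / aOpt ε) ^ (1 + (1 - ε)))) := by
  obtain ⟨h0, h1⟩ := hε
  have h2ε : (0:ℝ) < 2 - ε := by linarith
  have h1m : (0:ℝ) < 1 - ε := by linarith
  have h1p : (0:ℝ) < 1 + ε := by linarith
  have hhalf : (0:ℝ) < 1 - ε / 2 := by linarith
  have hrw : (1:ℝ) + (1 - ε) = 2 - ε := by ring
  rw [hrw]
  set A : ℝ := ε ^ ε * (2 - ε) ^ (2 - ε) with hAdef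
  set B : ℝ := (1 - ε) ^ (1 - ε) * (1 + ε) ^ (1 + ε) with hBdef
  have hApos : 0 < A := mul_pos (Real.rpow_pos_of_pos h0 _) (Real.rpow_pos_of_pos h2ε _)
  have hBpos : 0 < B := mul_pos (Real.rpow_pos_of_pos h1m _) (Real.rpow_pos_of_pos h1p _)
  have hSpos : 0 < A + B := by linarith
  have ha : aOpt ε = A / (A + B) := by
    rw [hAdef, hBdef]; unfold aOpt; rw [hrw]
  have h1a : 1 - aOpt ε = B / (A + B) := by
    rw [ha]; field_simp; ring
  have hapos : 0 < aOpt ε := by rw [ha]; positivity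
  have h1apos : 0 < 1 - aOpt ε := by rw [h1a]; positivity
  have hlA : Real.log A = ε * Real.log ε + (2 - ε) * Real.log (2 - ε) := by
    rw [hAdef, Real.log_mul (Real.rpow_pos_of_pos h0 _).ne' (Real.rpow_pos_of_pos h2ε _).ne',
      Real.log_rpow h0, Real.log_rpow h2ε]
  have hlB : Real.log B = (1 - ε) * Real.log (1 - ε) + (1 + ε) * Real.log (1 + ε) := by
    rw [hBdef, Real.log_mul (Real.rpow_pos_of_pos h1m _).ne' (Real.rpow_pos_of_pos h1p _).ne',
      Real.log_rpow h1m, Real.log_rpow h1p]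
  have hla : Real.log (aOpt ε) = Real.log A - Real.log (A + B) := by
    rw [ha, Real.log_div hApos.ne' hSpos.ne']
  have hl1a : Real.log (1 - aOpt ε) = Real.log B - Real.log (A + B) := by
    rw [h1a, Real.log_div hBpos.ne' hSpos.ne']
  have l1 : Real.log ((1 - ε / 2) / aOpt ε)
      = (Real.log (2 - ε) - Real.log 2) - (Real.log A - Real.log (A + B)) := by
    rw [Real.log_div hhalf.ne' hapos.ne', show (1:ℝ) - ε / 2 = (2 - ε) / 2 by ring,
      Real.log_div h2ε.ne' two_ne_zero, hla]
  have l2 : Real.log (ε / (2 * (1 - aOpt ε)))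
      = Real.log ε - (Real.log 2 + (Real.log B - Real.log (A + B))) := by
    rw [Real.log_div h0.ne' (mul_pos two_pos h1apos).ne',
      Real.log_mul two_ne_zero h1apos.ne', hl1a]
  have l3 : Real.log ((1 - ε) / (2 * aOpt ε))
      = Real.log (1 - ε) - (Real.log 2 + (Real.log A - Real.log (A + B))) := by
    rw [Real.log_div h1m.ne' (mul_pos two_pos hapos).ne',
      Real.log_mul two_ne_zero hapos.ne', hla]
  have l4 : Real.log ((1 + ε) / (2 * (1 - aOpt ε)))
      = Real.log (1 + ε) - (Real.log 2 + (Real.log B - Real.log (A + B))) := by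
    rw [Real.log_div h1p.ne' (mul_pos two_pos h1apos).ne',
      Real.log_mul two_ne_zero h1apos.ne', hl1a]
  have hq1 : (0:ℝ) < ε / (1 - aOpt ε) := by positivity
  have hq2 : (0:ℝ) < (2 - ε) / aOpt ε := by positivity
  have l5 : Real.log ((1 / 4) * (ε / (1 - aOpt ε)) ^ ε * ((2 - ε) / aOpt ε) ^ (2 - ε))
      = -(2 * Real.log 2)
        + ε * (Real.log ε - (Real.log B - Real.log (A + B)))
        + (2 - ε) * (Real.log (2 - ε) - (Real.log A - Real.log (A + B))) := by
    rw [Real.log_mul (by positivity) (Real.rpow_pos_of_pos hq2 _).ne',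
      Real.log_mul (by norm_num) (Real.rpow_pos_of_pos hq1 _).ne',
      Real.log_rpow hq1, Real.log_rpow hq2,
      Real.log_div h0.ne' h1apos.ne', Real.log_div h2ε.ne' hapos.ne', hla, hl1a,
      show (1/4:ℝ) = 2⁻¹ * 2⁻¹ by norm_num,
      Real.log_mul (by norm_num) (by norm_num), Real.log_inv]
    ring
  have hlog2 : Real.log 2 ≠ 0 := ne_of_gt (Real.log_pos (by norm_num))
  simp only [Real.logb, l1, l2, l3, l4, l5, hlA, hlB]
  constructor
  · field_simp
    ring
  · field_simp
    ring
end Stmt12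
end

section
/- (Bellman verification is sufficient for optimal average reward, finite case.) Consider an MDP with finite state space Z, finite action space U, finite disturbance space W, transition function F: Z × U × W → Z, disturbance kernel P_w(·|z,u), and bounded reward g: Z × U → ℝ. If there exist ρ ∈ ℝ and h: Z → ℝ such that ρ + h(z) = max_{u∈U} [ g(z,u) + Σ_w P_w(w|z,u)·h(F(z,u,w)) ] for every z ∈ Z, then for every policy π, the infinite-horizon average reward liminf_{n→∞} (1/n)·E_π[Σ_{t=0}^{n−1} g(Z_t, U_{t+1})] ≤ ρ, and there exists a stationary policy achieving average reward ρ; hence ρ* = ρ. -/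
open scoped Classical

namespace Stmt14

variable {Z U W : Type}

variable (F : Z → U → W → Z) (Pw : Z → U → W → ℝ) (g : Z → U → ℝ)

/-- The MDP state after `t` steps, from initial state `z0`, under policy `act` (a map from
disturbance histories to actions) and the disturbance sequence `w`. -/
def state (z0 : Z) (act : (t : ℕ) → (Fin t → W) → U) : (t : ℕ) → (Fin t → W) → Z
  | 0, _ => z0
  | t + 1, w =>
      F (state z0 act t (Fin.init w)) (act t (Fin.init w)) (w (Fin.last t))

/-- Probability of a disturbance history under the policy `act`. -/
noncomputable def prob (z0 : Z) (act : (t : ℕ) → (Fin t → W) → U) :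
    (t : ℕ) → (Fin t → W) → ℝ
  | 0, _ => 1
  | t + 1, w =>
      prob z0 act t (Fin.init w) *
        Pw (state F z0 act t (Fin.init w)) (act t (Fin.init w)) (w (Fin.last t))

/-- Expected reward `E_π[g(Z_t, U_{t+1})]` collected at step `t`. -/
noncomputable def expReward [Fintype W] (z0 : Z) (act : (t : ℕ) → (Fin t → W) → U)
    (t : ℕ) : ℝ :=
  ∑ w : Fin t → W, prob F Pw z0 act t w * g (state F z0 act t w) (act t w)

/-- The state sequence generated by the stationary policy `σ : Z → U`. -/
def stateStat (z0 : Z) (σ : Z → U) : (t : ℕ) → (Fin t → W) → Z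
  | 0, _ => z0
  | t + 1, w =>
      F (stateStat z0 σ t (Fin.init w)) (σ (stateStat z0 σ t (Fin.init w)))
        (w (Fin.last t))

/-- The history-dependent form of the stationary policy `σ`. -/
def actStat (z0 : Z) (σ : Z → U) (t : ℕ) (w : Fin t → W) : U :=
  σ (stateStat F z0 σ t w)

def snocEquiv (t : ℕ) : ((Fin t → W) × W) ≃ (Fin (t+1) → W) where
  toFun p := Fin.snoc p.1 p.2
  invFun w := (Fin.init w, w (Fin.last t))
  left_inv p := by simp
  right_inv w := by simp

lemma sum_snoc [Fintype W] (t : ℕ) (f : (Fin (t+1) → W) → ℝ) :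
    ∑ w : Fin (t+1) → W, f w = ∑ w : Fin t → W, ∑ w' : W, f (Fin.snoc w w') := by
  rw [← Equiv.sum_comp (snocEquiv (W := W) t) f, Fintype.sum_prod_type]
  rfl

lemma prob_snoc (z0 : Z) (act : (t : ℕ) → (Fin t → W) → U) (t : ℕ) (w : Fin t → W) (w' : W) :
    prob F Pw z0 act (t+1) (Fin.snoc w w')
      = prob F Pw z0 act t w * Pw (state F z0 act t w) (act t w) w' := by
  simp [prob]

lemma state_snoc (z0 : Z) (act : (t : ℕ) → (Fin t → W) → U) (t : ℕ) (w : Fin t → W) (w' : W) :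
    state F z0 act (t+1) (Fin.snoc w w')
      = F (state F z0 act t w) (act t w) w' := by
  simp [state]

lemma prob_nonneg (hPw0 : ∀ z u w, 0 ≤ Pw z u w) (z0 : Z)
    (act : (t : ℕ) → (Fin t → W) → U) : ∀ t w, 0 ≤ prob F Pw z0 act t w := by
  intro t
  induction t with
  | zero => intro w; simp [prob]
  | succ t ih => intro w; exact mul_nonneg (ih _) (hPw0 _ _ _)

lemma prob_sum [Fintype W] (hPw1 : ∀ z u, ∑ w : W, Pw z u w = 1) (z0 : Z)
    (act : (t : ℕ) → (Fin t → W) → U) : ∀ t, ∑ w : Fin t → W, prob F Pw z0 act t w = 1 := by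
  intro t
  induction t with
  | zero => simp [prob]
  | succ t ih =>
      rw [sum_snoc]
      simp only [prob_snoc, ← Finset.mul_sum, hPw1, mul_one, ih]

noncomputable def Eh [Fintype W] (h : Z → ℝ) (z0 : Z)
    (act : (t : ℕ) → (Fin t → W) → U) (t : ℕ) : ℝ :=
  ∑ w : Fin t → W, prob F Pw z0 act t w * h (state F z0 act t w)

lemma Eh_zero [Fintype W] (h : Z → ℝ) (z0 : Z) (act : (t : ℕ) → (Fin t → W) → U) :
    Eh F Pw h z0 act 0 = h z0 := by
  simp [Eh, prob, state]

lemma Eh_succ [Fintype W] (h : Z → ℝ) (z0 : Z) (act : (t : ℕ) → (Fin t → W) → U) (t : ℕ) :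
    Eh F Pw h z0 act (t+1)
      = ∑ w : Fin t → W, prob F Pw z0 act t w *
          ∑ w' : W, Pw (state F z0 act t w) (act t w) w'
            * h (F (state F z0 act t w) (act t w) w') := by
  rw [Eh, sum_snoc]
  refine Finset.sum_congr rfl fun w _ => ?_
  rw [Finset.mul_sum]
  refine Finset.sum_congr rfl fun w' _ => ?_
  rw [prob_snoc, state_snoc, mul_assoc]

lemma abs_expect_le [Fintype W] (hPw0 : ∀ z u w, 0 ≤ Pw z u w)
    (hPw1 : ∀ z u, ∑ w : W, Pw z u w = 1) (z0 : Z) (act : (t : ℕ) → (Fin t → W) → U)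
    (φ : Z → U → ℝ) (C : ℝ) (hb : ∀ z u, |φ z u| ≤ C) (t : ℕ) :
    |∑ w : Fin t → W, prob F Pw z0 act t w * φ (state F z0 act t w) (act t w)| ≤ C := by
  calc |∑ w : Fin t → W, prob F Pw z0 act t w * φ (state F z0 act t w) (act t w)|
      ≤ ∑ w : Fin t → W, |prob F Pw z0 act t w * φ (state F z0 act t w) (act t w)| :=
        Finset.abs_sum_le_sum_abs _ _
    _ ≤ ∑ w : Fin t → W, prob F Pw z0 act t w * C := by
        refine Finset.sum_le_sum fun w _ => ?_
        rw [abs_mul, abs_of_nonneg (prob_nonneg F Pw hPw0 z0 act t w)]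
        exact mul_le_mul_of_nonneg_left (hb _ _) (prob_nonneg F Pw hPw0 z0 act t w)
    _ = C := by rw [← Finset.sum_mul, prob_sum F Pw hPw1, one_mul]

lemma state_actStat (z0 : Z) (σ : Z → U) :
    ∀ t (w : Fin t → W), state F z0 (actStat F z0 σ) t w = stateStat F z0 σ t w := by
  intro t
  induction t with
  | zero => intro w; rfl
  | succ t ih => intro w; simp [state, stateStat, actStat, ih]

/-- One-step key identity: combining reward and expectation of `h`. -/
lemma step_sum [Fintype W] (h : Z → ℝ) (z0 : Z) (act : (t : ℕ) → (Fin t → W) → U) (t : ℕ) :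
    expReward F Pw g z0 act t + Eh F Pw h z0 act (t+1)
      = ∑ w : Fin t → W, prob F Pw z0 act t w *
          (g (state F z0 act t w) (act t w) +
            ∑ w' : W, Pw (state F z0 act t w) (act t w) w'
              * h (F (state F z0 act t w) (act t w) w')) := by
  rw [expReward, Eh_succ, ← Finset.sum_add_distrib]
  exact Finset.sum_congr rfl fun w _ => (mul_add _ _ _).symm

/-- Bellman verification theorem, finite average-reward MDP. If `ρ ∈ ℝ` and
a bounded `h : Z → ℝ` satisfy the Bellman equation
`ρ + h z = max_u [g z u + Σ_w P_w(w|z,u)·h(F z u w)]` for every `z`, then every policy has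
infinite-horizon average reward at most `ρ`, and some stationary policy attains `ρ`;
hence `ρ* = ρ`. -/
theorem bellman_verification [Fintype Z] [Fintype U] [Fintype W] [Nonempty U]
    (hPw0 : ∀ z u w, 0 ≤ Pw z u w) (hPw1 : ∀ z u, ∑ w : W, Pw z u w = 1)
    (ρ : ℝ) (h : Z → ℝ)
    (hBellman : ∀ z : Z,
      ρ + h z = ⨆ u : U, (g z u + ∑ w : W, Pw z u w * h (F z u w)))
    (z0 : Z) :
    (∀ act : (t : ℕ) → (Fin t → W) → U,
        Filter.liminf
          (fun n : ℕ => (∑ t ∈ Finset.range n, expReward F Pw g z0 act t) / (n : ℝ))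
          Filter.atTop ≤ ρ) ∧
      ∃ σ : Z → U,
        Filter.liminf
          (fun n : ℕ =>
            (∑ t ∈ Finset.range n, expReward F Pw g z0 (actStat F z0 σ) t) / (n : ℝ))
          Filter.atTop = ρ := by
  classical
  -- bounds
  set Ch : ℝ := ∑ z : Z, |h z| with hCh
  have hChb : ∀ z, |h z| ≤ Ch :=
    fun z => Finset.single_le_sum (f := fun z => |h z|)
      (fun _ _ => abs_nonneg _) (Finset.mem_univ z)
  set Cg : ℝ := ∑ p : Z × U, |g p.1 p.2| with hCgdef
  have hCgb : ∀ z u, |g z u| ≤ Cg :=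
    fun z u => Finset.single_le_sum (f := fun p : Z × U => |g p.1 p.2|)
      (fun _ _ => abs_nonneg _) (Finset.mem_univ (z, u))
  have hCg0 : 0 ≤ Cg := Finset.sum_nonneg fun _ _ => abs_nonneg _
  have hEhb : ∀ (act : (t : ℕ) → (Fin t → W) → U) t, |Eh F Pw h z0 act t| ≤ Ch := by
    intro act t
    simpa [Eh] using
      abs_expect_le F Pw hPw0 hPw1 z0 act (fun z _ => h z) Ch (fun z _ => hChb z) t
  have hRb : ∀ (act : (t : ℕ) → (Fin t → W) → U) t, |expReward F Pw g z0 act t| ≤ Cg :=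
    fun act t => abs_expect_le F Pw hPw0 hPw1 z0 act g Cg hCgb t
  have hbdd : ∀ z : Z, BddAbove (Set.range fun u : U =>
      g z u + ∑ w : W, Pw z u w * h (F z u w)) :=
    fun z => (Set.finite_range _).bddAbove
  -- step inequality for any policy
  have step_le : ∀ (act : (t : ℕ) → (Fin t → W) → U) t,
      expReward F Pw g z0 act t + Eh F Pw h z0 act (t+1) ≤ ρ + Eh F Pw h z0 act t := by
    intro act t
    rw [step_sum]
    calc ∑ w : Fin t → W, prob F Pw z0 act t w *
          (g (state F z0 act t w) (act t w) +
            ∑ w' : W, Pw (state F z0 act t w) (act t w) w'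
              * h (F (state F z0 act t w) (act t w) w'))
        ≤ ∑ w : Fin t → W, prob F Pw z0 act t w * (ρ + h (state F z0 act t w)) := by
          refine Finset.sum_le_sum fun w _ => ?_
          refine mul_le_mul_of_nonneg_left ?_ (prob_nonneg F Pw hPw0 z0 act t w)
          rw [hBellman (state F z0 act t w)]
          exact le_ciSup (hbdd _) (act t w)
      _ = ρ + Eh F Pw h z0 act t := by
          simp only [mul_add, Finset.sum_add_distrib, ← Finset.sum_mul,
            prob_sum F Pw hPw1 z0 act t, one_mul, Eh]
  -- telescoping bound for any policy
  have tel_le : ∀ (act : (t : ℕ) → (Fin t → W) → U) n,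
      ∑ t ∈ Finset.range n, expReward F Pw g z0 act t
        ≤ n * ρ + (h z0 - Eh F Pw h z0 act n) := by
    intro act n
    induction n with
    | zero => simp [Eh_zero]
    | succ n ih =>
        rw [Finset.sum_range_succ]
        have := step_le act n
        push_cast
        push_cast at ih
        linarith
  -- Part 1
  have part1 : ∀ act : (t : ℕ) → (Fin t → W) → U,
      Filter.liminf
        (fun n : ℕ => (∑ t ∈ Finset.range n, expReward F Pw g z0 act t) / (n : ℝ))
        Filter.atTop ≤ ρ := by
    intro act
    set u : ℕ → ℝ :=
      fun n => (∑ t ∈ Finset.range n, expReward F Pw g z0 act t) / (n : ℝ) with hu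
    set v : ℕ → ℝ := fun n => ρ + (|h z0| + Ch) / (n : ℝ) with hv
    have hvT : Filter.Tendsto v Filter.atTop (nhds ρ) := by
      have h0 : Filter.Tendsto (fun n : ℕ => (|h z0| + Ch) * (1 / (n : ℝ)))
          Filter.atTop (nhds 0) := by
        simpa using tendsto_one_div_atTop_nhds_zero_nat.const_mul (|h z0| + Ch)
      have := Filter.Tendsto.add (tendsto_const_nhds (x := ρ) (f := Filter.atTop)) h0
      simpa [hv, mul_one_div, div_eq_mul_inv] using this
    have hle : ∀ᶠ n in Filter.atTop, u n ≤ v n := by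
      refine Filter.eventually_atTop.2 ⟨1, fun n hn => ?_⟩
      have hn0 : (0 : ℝ) < (n : ℝ) := by exact_mod_cast hn
      have h1 : ∑ t ∈ Finset.range n, expReward F Pw g z0 act t
          ≤ n * ρ + (|h z0| + Ch) := by
        have := tel_le act n
        have h2 : h z0 - Eh F Pw h z0 act n ≤ |h z0| + Ch := by
          have := hEhb act n
          have := abs_le.mp (hEhb act n)
          have := le_abs_self (h z0)
          linarith
        linarith
      have : u n ≤ ((n : ℝ) * ρ + (|h z0| + Ch)) / (n : ℝ) :=
        div_le_div_of_nonneg_right h1 hn0.le |>.trans_eq rfl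
      calc u n ≤ ((n : ℝ) * ρ + (|h z0| + Ch)) / (n : ℝ) := this
        _ = v n := by
            rw [hv, add_div, mul_div_cancel_left₀ _ (ne_of_gt hn0)]
    have hubdd : Filter.IsBoundedUnder (· ≥ ·) Filter.atTop u := by
      refine Filter.isBoundedUnder_of ⟨-Cg, fun n => ?_⟩
      rcases Nat.eq_zero_or_pos n with rfl | hn
      · simp [hu]; linarith
      · have hn0 : (0 : ℝ) < (n : ℝ) := by exact_mod_cast hn
        have hsum : -( (n : ℝ) * Cg) ≤ ∑ t ∈ Finset.range n, expReward F Pw g z0 act t := by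
          have : |∑ t ∈ Finset.range n, expReward F Pw g z0 act t| ≤ (n : ℝ) * Cg := by
            calc |∑ t ∈ Finset.range n, expReward F Pw g z0 act t|
                ≤ ∑ t ∈ Finset.range n, |expReward F Pw g z0 act t| :=
                  Finset.abs_sum_le_sum_abs _ _
              _ ≤ ∑ _t ∈ Finset.range n, Cg := Finset.sum_le_sum fun t _ => hRb act t
              _ = (n : ℝ) * Cg := by simp [mul_comm]
          linarith [abs_le.mp this |>.1]
        have : (-( (n : ℝ) * Cg)) / (n : ℝ) ≤ u n := div_le_div_of_nonneg_right hsum hn0.le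
        calc -Cg = (-( (n : ℝ) * Cg)) / (n : ℝ) := by
              field_simp
            _ ≤ u n := this
    have hvcb : Filter.IsCoboundedUnder (· ≥ ·) Filter.atTop v :=
      (hvT.isBoundedUnder_le).isCoboundedUnder_ge
    calc Filter.liminf u Filter.atTop ≤ Filter.liminf v Filter.atTop :=
          Filter.liminf_le_liminf hle hubdd hvcb
      _ = ρ := hvT.liminf_eq
  refine ⟨part1, ?_⟩
  -- Part 2 : stationary policy
  have hexist : ∀ z : Z, ∃ u : U, ∀ u' : U,
      g z u' + ∑ w : W, Pw z u' w * h (F z u' w)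
        ≤ g z u + ∑ w : W, Pw z u w * h (F z u w) := by
    intro z
    obtain ⟨u, hu⟩ := Finite.exists_max (fun u : U => g z u + ∑ w : W, Pw z u w * h (F z u w))
    exact ⟨u, hu⟩
  choose σ hσ using hexist
  have hσeq : ∀ z : Z, ρ + h z = g z (σ z) + ∑ w : W, Pw z (σ z) w * h (F z (σ z) w) := by
    intro z
    rw [hBellman z]
    exact le_antisymm (ciSup_le (hσ z)) (le_ciSup (hbdd z) (σ z))
  set act := actStat F z0 σ with hact
  have step_eq : ∀ t, expReward F Pw g z0 act t + Eh F Pw h z0 act (t+1)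
      = ρ + Eh F Pw h z0 act t := by
    intro t
    rw [step_sum]
    have : ∀ w : Fin t → W,
        g (state F z0 act t w) (act t w) +
          ∑ w' : W, Pw (state F z0 act t w) (act t w) w'
            * h (F (state F z0 act t w) (act t w) w')
          = ρ + h (state F z0 act t w) := by
      intro w
      have hs : act t w = σ (state F z0 act t w) := by
        rw [hact, actStat, state_actStat]
      rw [hs, ← hσeq]
    calc ∑ w : Fin t → W, prob F Pw z0 act t w *
          (g (state F z0 act t w) (act t w) +
            ∑ w' : W, Pw (state F z0 act t w) (act t w) w'
              * h (F (state F z0 act t w) (act t w) w'))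
        = ∑ w : Fin t → W, prob F Pw z0 act t w * (ρ + h (state F z0 act t w)) := by
          exact Finset.sum_congr rfl fun w _ => by rw [this w]
      _ = ρ + Eh F Pw h z0 act t := by
          simp only [mul_add, Finset.sum_add_distrib, ← Finset.sum_mul,
            prob_sum F Pw hPw1 z0 act t, one_mul, Eh]
  have tel_eq : ∀ n, ∑ t ∈ Finset.range n, expReward F Pw g z0 act t
      = n * ρ + (h z0 - Eh F Pw h z0 act n) := by
    intro n
    induction n with
    | zero => simp [Eh_zero]
    | succ n ih =>
        rw [Finset.sum_range_succ]
        have := step_eq n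
        push_cast
        push_cast at ih
        linarith
  refine ⟨σ, ?_⟩
  set u : ℕ → ℝ :=
    fun n => (∑ t ∈ Finset.range n, expReward F Pw g z0 act t) / (n : ℝ) with hu
  have hd : Filter.Tendsto (fun n : ℕ => (h z0 - Eh F Pw h z0 act n) / (n : ℝ))
      Filter.atTop (nhds 0) := by
    have hgT : Filter.Tendsto (fun n : ℕ => (|h z0| + Ch) * (1 / (n : ℝ)))
        Filter.atTop (nhds 0) := by
      simpa using tendsto_one_div_atTop_nhds_zero_nat.const_mul (|h z0| + Ch)
    refine squeeze_zero_norm (fun n => ?_) hgT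
    rcases Nat.eq_zero_or_pos n with rfl | hn
    · simp
    · have hn0 : (0 : ℝ) < (n : ℝ) := by exact_mod_cast hn
      rw [Real.norm_eq_abs, abs_div, abs_of_pos hn0, mul_one_div, div_le_div_iff_of_pos_right hn0]
      calc |h z0 - Eh F Pw h z0 act n| ≤ |h z0| + |Eh F Pw h z0 act n| := abs_sub _ _
        _ ≤ |h z0| + Ch := by linarith [hEhb act n]
  have huT : Filter.Tendsto u Filter.atTop (nhds ρ) := by
    have h1 : Filter.Tendsto (fun n : ℕ => ρ + (h z0 - Eh F Pw h z0 act n) / (n : ℝ))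
        Filter.atTop (nhds ρ) := by
      simpa using (tendsto_const_nhds (x := ρ) (f := Filter.atTop)).add hd
    apply h1.congr'
    refine Filter.eventually_atTop.2 ⟨1, fun n hn => ?_⟩
    have hn0 : ((n : ℝ)) ≠ 0 := by positivity
    show ρ + (h z0 - Eh F Pw h z0 act n) / (n : ℝ)
        = (∑ t ∈ Finset.range n, expReward F Pw g z0 act t) / (n : ℝ)
    rw [tel_eq n, add_div, mul_div_cancel_left₀ _ hn0]
  exact huT.liminf_eq

end Stmt14
end
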